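/- Let X and Y be smooth manifolds of the same finite dimension, with X compact, and let f : X → Y be a C¹ map. Then the set of points y ∈ Y whose preimage f⁻¹(y) is infinite has measure zero in Y. -/

import Mathlib

open MeasureTheory Manifold Filter Set Topology

/-! Every point with infinite fibre is the image of an accumulation point of that fibre (X is
compact), and `f` is injective on no neighbourhood of such a point. By the inverse function
theorem the Jacobian of `f` in charts vanishes there, so in each chart these values form a null
set by the Sard-type bound for `C¹` maps with vanishing Jacobian; finitely many charts cover `X`. -/

def LocallyInjectiveAt {α β : Type*} [TopologicalSpace α] (f : α → β) (x : α) : Prop :=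
  ∃ U ∈ 𝓝 x, InjOn f U

theorem exists_not_locallyInjectiveAt_of_infinite_preimage {X Y : Type*} [TopologicalSpace X]
    [CompactSpace X] [TopologicalSpace Y] [T1Space Y] {f : X → Y} (hf : Continuous f) {y : Y}
    (hy : (f ⁻¹' {y}).Infinite) : ∃ x, f x = y ∧ ¬ LocallyInjectiveAt f x := by
  obtain ⟨x, hx⟩ := hy.exists_accPt_principal
  have hfx : f x = y :=
    (isClosed_singleton.preimage hf).closure_subset (mem_closure_iff_clusterPt.mpr hx.clusterPt)
  refine ⟨x, hfx, fun ⟨U, hU, hinj⟩ => ?_⟩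
  obtain ⟨z, ⟨hzU, hz⟩, hzx⟩ := accPt_iff_nhds.mp hx U hU
  exact hzx (hinj hzU (mem_of_mem_nhds hU) (hz.trans hfx.symm))

theorem HasStrictFDerivAt.locallyInjectiveAt {𝕜 E F : Type*} [NontriviallyNormedField 𝕜]
    [NormedAddCommGroup E] [NormedSpace 𝕜 E] [NormedAddCommGroup F] [NormedSpace 𝕜 F]
    [CompleteSpace E] {f : E → F} {f' : E ≃L[𝕜] F} {a : E}
    (hf : HasStrictFDerivAt f (f' : E →L[𝕜] F) a) : LocallyInjectiveAt f a :=
  ⟨_, hf.eventually_left_inverse, fun _ hx _ hy hxy => hx.symm.trans (hxy ▸ hy)⟩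

theorem det_fderiv_eq_zero_of_not_locallyInjectiveAt {𝕜 E : Type*} [RCLike 𝕜]
    [NormedAddCommGroup E] [NormedSpace 𝕜 E] [FiniteDimensional 𝕜 E] {f : E → E} {a : E}
    (hf : ContDiffAt 𝕜 1 f a) (hinj : ¬ LocallyInjectiveAt f a) : (fderiv 𝕜 f a).det = 0 := by
  have := FiniteDimensional.complete 𝕜 E
  by_contra hdet
  have hstrict : HasStrictFDerivAt f
      ((fderiv 𝕜 f a).toContinuousLinearEquivOfDetNeZero hdet : E →L[𝕜] E) a := by
    rw [ContinuousLinearMap.coe_toContinuousLinearEquivOfDetNeZero]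
    exact hf.hasStrictFDerivAt one_ne_zero
  exact hinj hstrict.locallyInjectiveAt

theorem LocallyInjectiveAt.of_comp_chart {X Y H F : Type*} [TopologicalSpace X]
    [TopologicalSpace H] {ψ : OpenPartialHomeomorph X H} {φ : Y → F} {f : X → Y} {x : X}
    (hx : x ∈ ψ.source) (h : LocallyInjectiveAt (φ ∘ f ∘ ψ.symm) (ψ x)) :
    LocallyInjectiveAt f x := by
  obtain ⟨U, hU, hinj⟩ := h
  refine ⟨ψ.source ∩ ψ ⁻¹' U, inter_mem (ψ.open_source.mem_nhds hx) (ψ.continuousAt hx hU),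
    fun a ha b hb hab => ψ.injOn ha.1 hb.1 (hinj ha.2 hb.2 ?_)⟩
  simp only [Function.comp_apply, ψ.left_inv ha.1, ψ.left_inv hb.1, hab]

section Charts

variable {𝕜 E E' X Y : Type*} [NontriviallyNormedField 𝕜]
  [NormedAddCommGroup E] [NormedSpace 𝕜 E] [NormedAddCommGroup E'] [NormedSpace 𝕜 E']
  [TopologicalSpace X] [ChartedSpace E X] [TopologicalSpace Y] [ChartedSpace E' Y]
  {n : WithTop ℕ∞} [IsManifold 𝓘(𝕜, E) n X] [IsManifold 𝓘(𝕜, E') n Y]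
  {f : X → Y} {ψ : OpenPartialHomeomorph X E} {φ : OpenPartialHomeomorph Y E'} {x : X}

theorem ContMDiffAt.contDiffAt_chart_comp (hf : ContMDiffAt 𝓘(𝕜, E) 𝓘(𝕜, E') n f x)
    (hψ : ψ ∈ atlas E X) (hφ : φ ∈ atlas E' Y) (hx : x ∈ ψ.source) (hfx : f x ∈ φ.source) :
    ContDiffAt 𝕜 n (φ ∘ f ∘ ψ.symm) (ψ x) := by
  have hψ' := contMDiffAt_symm_of_mem_maximalAtlas
    (IsManifold.subset_maximalAtlas (I := 𝓘(𝕜, E)) (n := n) hψ)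
    (ψ.map_source hx)
  have hφ' := contMDiffAt_of_mem_maximalAtlas
    (IsManifold.subset_maximalAtlas (I := 𝓘(𝕜, E')) (n := n) hφ) hfx
  rw [← ψ.left_inv hx] at hf hφ'
  exact (hφ'.comp _ hf |>.comp _ hψ').contDiffAt

end Charts

theorem addHaar_image_chart_not_locallyInjectiveAt_eq_zero {E X Y : Type*}
    [NormedAddCommGroup E] [NormedSpace ℝ E] [FiniteDimensional ℝ E] [MeasurableSpace E]
    [BorelSpace E] (μ : Measure E) [μ.IsAddHaarMeasure]
    [TopologicalSpace X] [ChartedSpace E X] [IsManifold 𝓘(ℝ, E) 1 X]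
    [TopologicalSpace Y] [ChartedSpace E Y] [IsManifold 𝓘(ℝ, E) 1 Y]
    {f : X → Y} (hf : ContMDiff 𝓘(ℝ, E) 𝓘(ℝ, E) 1 f)
    {ψ : OpenPartialHomeomorph X E} {φ : OpenPartialHomeomorph Y E}
    (hψ : ψ ∈ atlas E X) (hφ : φ ∈ atlas E Y) :
    μ (φ '' (f '' {x | x ∈ ψ.source ∧ f x ∈ φ.source ∧ ¬ LocallyInjectiveAt f x})) = 0 := by
  set S := {x | x ∈ ψ.source ∧ f x ∈ φ.source ∧ ¬ LocallyInjectiveAt f x}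
  have himage : φ '' (f '' S) = (φ ∘ f ∘ ψ.symm) '' (ψ '' S) := by
    simp only [image_image, Function.comp_apply]
    exact image_congr fun x hx => by rw [ψ.left_inv hx.1]
  rw [himage]
  refine addHaar_image_eq_zero_of_det_fderivWithin_eq_zero μ
    (f' := fderiv ℝ (φ ∘ f ∘ ψ.symm)) ?_ ?_ <;> rintro - ⟨x, ⟨hx, hfx, hloc⟩, rfl⟩
  · exact ((hf x).contDiffAt_chart_comp hψ hφ hx hfx).differentiableAt one_ne_zero
      |>.hasFDerivAt.hasFDerivWithinAt
  · exact det_fderiv_eq_zero_of_not_locallyInjectiveAt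
      ((hf x).contDiffAt_chart_comp hψ hφ hx hfx) fun h => hloc (h.of_comp_chart hx)

/-- Let `X` and `Y` be smooth manifolds of the same finite dimension `n`,
with `X` compact, and `f : X → Y` a `C¹` map. Then the set of points `y ∈ Y` whose preimage
`f ⁻¹' {y}` is infinite has measure zero in `Y`, in the sense that its image in every chart
of `Y` has Lebesgue measure zero. -/
theorem infinite_fiber_set_measure_zero
    (n : ℕ) {X Y : Type*}
    [TopologicalSpace X] [ChartedSpace (EuclideanSpace ℝ (Fin n)) X]
    [IsManifold (𝓡 n) (⊤ : ℕ∞) X] [CompactSpace X]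
    [TopologicalSpace Y] [ChartedSpace (EuclideanSpace ℝ (Fin n)) Y]
    [IsManifold (𝓡 n) (⊤ : ℕ∞) Y]
    (f : X → Y) (hf : ContMDiff (𝓡 n) (𝓡 n) 1 f) :
    ∀ φ ∈ atlas (EuclideanSpace ℝ (Fin n)) Y,
      volume (φ '' ({y : Y | (f ⁻¹' {y}).Infinite} ∩ φ.source)) = 0 := by
  intro φ hφ
  have := ChartedSpace.t1Space (EuclideanSpace ℝ (Fin n)) Y
  obtain ⟨t, ht⟩ := isCompact_univ.elim_finite_subcover
    (fun x : X => (chartAt (EuclideanSpace ℝ (Fin n)) x).source)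
    (fun x => (chartAt _ x).open_source) (fun x _ => mem_iUnion.mpr ⟨x, mem_chart_source _ x⟩)
  refine measure_mono_null ?_ ((measure_biUnion_null_iff t.countable_toSet).mpr fun x₀ _ =>
    addHaar_image_chart_not_locallyInjectiveAt_eq_zero volume hf (chart_mem_atlas _ x₀) hφ)
  rintro - ⟨y, ⟨hy, hyφ⟩, rfl⟩
  obtain ⟨x, rfl, hx⟩ := exists_not_locallyInjectiveAt_of_infinite_preimage hf.continuous hy
  obtain ⟨x₀, hx₀, hxsrc⟩ := mem_iUnion₂.mp (ht (mem_univ x))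
  exact mem_biUnion hx₀ (mem_image_of_mem φ (mem_image_of_mem f ⟨hxsrc, hyφ, hx⟩))
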